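/- arXiv:2212.07819 — 5 statements merged into one kernel-verified Lean document; each statement's English description precedes it below -/
import Mathlib

section
/- Let F be a field with at least 4 elements, χ : F^× → {±1} a group homomorphism with χ(−1) = 1, and ℓ ∈ F with ℓ ∉ {0, 1}. (a) If χ(ℓ) = 1 and χ(1 − ℓ) = −1, then [a] = [ℓ·a] in RP₊(F)[1/2]_χ for all a ∈ F^×. (b) If χ(ℓ) = −1 and χ(1 − ℓ) = −1, then [a] = [(1 − ℓ⁻¹)·a] in RP₊(F)[1/2]_χ for all a ∈ F^×. -/
/-!
Write `[x]` for the class of `x ∈ F` (with `[0] = 0`) and extend `χ` by `χ 0 = 1`. The five-term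
relation for `(x, y)` and the one for `(y, x)`, rewritten with `[x⁻¹] = -[x]`, express the same
element `L = [x] - [y] + χ(x)[y/x]` as `χ(1-x)•E` and as `χ(1-y)•E` for one and the same `E`
whenever `χ x = χ y`. If moreover `χ(1-x) ≠ χ(1-y)`, then `2E = 0`, so `E = L = 0` since `2` is
invertible.

Assume `χ ℓ = 1` and `χ(1-ℓ) = -1`. Playing the relations for `(ℓ, ℓ⁻¹)`, `(-ℓ, -ℓ⁻¹)` and then
`(ℓ, -ℓ)` or `(ℓ², ℓ)` against each other gives `[ℓ] = 0`. The relation for `(a, ℓa)` then links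
`[a] - [ℓa]` to `[b]` and `[ℓb]` with `b = (1-a)/(1-ℓa)`; as `a ↦ b` is an involution, the
relation for `(b, ℓb)` links back to `[a]` and `[ℓa]`, and a case check on the signs gives
`[a] = [ℓa]`. Part (b) is part (a) for `1 - ℓ⁻¹`, whose character is `χ(ℓ)χ(1-ℓ) = 1` and for
which `1 - (1 - ℓ⁻¹) = ℓ⁻¹`.
-/

noncomputable section

open Polynomial

/-- The ring `ℤ[1/2]`, realized as the subring of `ℚ` generated by `1/2`. -/
def ZhalfSub : Subring ℚ := Subring.closure {(2 : ℚ)⁻¹}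

abbrev Zhalf : Type := ZhalfSub

variable (F : Type) [Field F]

/-- The generator `[u]` of the free `ℤ[1/2]`-module on `Fˣ`. -/
def rpGen (u : Fˣ) : Fˣ →₀ Zhalf := Finsupp.single u 1

/-- The defining relations of `RP₊(F)[1/2]_χ`: (i) `[1] = 0`; (ii) the twisted five-term
relations; (iii) `χ(−1)·[x] = [x]`; (iv) `[x] = −[x⁻¹]`. -/
def rpRels (χ : Fˣ →* ℤˣ) : Set (Fˣ →₀ Zhalf) :=
  {v | v = rpGen F 1} ∪
  {v | ∃ (x y : F) (hx0 : x ≠ 0) (hx1 : x ≠ 1) (hy0 : y ≠ 0) (hy1 : y ≠ 1) (_ : x ≠ y),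
      v = rpGen F (Units.mk0 x hx0) - rpGen F (Units.mk0 y hy0)
        + ((χ (Units.mk0 x hx0) : ℤ) : Zhalf) •
            rpGen F (Units.mk0 (y / x) (div_ne_zero hy0 hx0))
        - ((χ (Units.mk0 (x⁻¹ - 1)
              (sub_ne_zero.mpr (fun h => hx1 (inv_eq_one.mp h)))) : ℤ) : Zhalf) •
            rpGen F (Units.mk0 ((1 - x⁻¹) / (1 - y⁻¹))
              (div_ne_zero (sub_ne_zero.mpr (fun h => hx1 (inv_eq_one.mp h.symm)))
                (sub_ne_zero.mpr (fun h => hy1 (inv_eq_one.mp h.symm)))))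
        + ((χ (Units.mk0 (1 - x) (sub_ne_zero.mpr (Ne.symm hx1))) : ℤ) : Zhalf) •
            rpGen F (Units.mk0 ((1 - x) / (1 - y))
              (div_ne_zero (sub_ne_zero.mpr (Ne.symm hx1)) (sub_ne_zero.mpr (Ne.symm hy1))))} ∪
  {v | ∃ u : Fˣ, v = ((χ (-1) : ℤ) : Zhalf) • rpGen F u - rpGen F u} ∪
  {v | ∃ u : Fˣ, v = rpGen F u + rpGen F u⁻¹}

/-- The submodule of relations. -/
def rpSub (χ : Fˣ →* ℤˣ) : Submodule Zhalf (Fˣ →₀ Zhalf) :=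
  Submodule.span Zhalf (rpRels F χ)

/-- The `ℤ[1/2]`-module `RP₊(F)[1/2]_χ`. -/
def RPplus (χ : Fˣ →* ℤˣ) : Type :=
  (Fˣ →₀ Zhalf) ⧸ rpSub F χ

instance (χ : Fˣ →* ℤˣ) : AddCommGroup (RPplus F χ) :=
  inferInstanceAs (AddCommGroup ((Fˣ →₀ Zhalf) ⧸ rpSub F χ))

instance (χ : Fˣ →* ℤˣ) : Module Zhalf (RPplus F χ) :=
  inferInstanceAs (Module Zhalf ((Fˣ →₀ Zhalf) ⧸ rpSub F χ))

/-- The class `[u]` of `u ∈ F^×` in `RP₊(F)[1/2]_χ`. -/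
def rpCls (χ : Fˣ →* ℤˣ) (u : Fˣ) : RPplus F χ :=
  Submodule.Quotient.mk (rpGen F u)

end

lemma Zhalf.eq_zero_of_add_self_eq_zero {M : Type*} [AddCommGroup M] [Module Zhalf M] {v : M}
    (h : v + v = 0) : v = 0 := by
  let half : Zhalf := ⟨2⁻¹, Subring.subset_closure rfl⟩
  have half_add_half : half + half = 1 := Subtype.ext (by norm_num [half])
  rw [← one_smul Zhalf v, ← half_add_half, add_smul, ← smul_add, h, smul_zero]

lemma Zhalf.eq_zero_of_smul_eq_smul {M : Type*} [AddCommGroup M] [Module Zhalf M] {w : M}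
    {s t : ℤˣ} (hst : s ≠ t) (h : s • w = t • w) : w = 0 := by
  have ht : t = -s := by
    rcases Int.units_eq_one_or s with rfl | rfl <;> rcases Int.units_eq_one_or t with rfl | rfl <;>
      simp_all
  rw [ht, Units.neg_smul, eq_neg_iff_add_eq_zero] at h
  exact (smul_eq_zero_iff_eq s).mp (Zhalf.eq_zero_of_add_self_eq_zero h)

namespace RPplus

variable {F : Type} [Field F] (χ : Fˣ →* ℤˣ)

open Classical in
noncomputable def cls (x : F) : RPplus F χ := if h : x = 0 then 0 else rpCls F χ (Units.mk0 x h)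

open Classical in
noncomputable def sgn (x : F) : ℤˣ := if h : x = 0 then 1 else χ (Units.mk0 x h)

variable {χ}

lemma cls_of_ne_zero {x : F} (h : x ≠ 0) : cls χ x = rpCls F χ (Units.mk0 x h) := dif_neg h

lemma sgn_of_ne_zero {x : F} (h : x ≠ 0) : sgn χ x = χ (Units.mk0 x h) := dif_neg h

lemma rpCls_eq_cls (u : Fˣ) : rpCls F χ u = cls χ (u : F) := by
  rw [cls_of_ne_zero u.ne_zero, Units.mk0_val]

@[simp] lemma cls_zero : cls χ (0 : F) = 0 := dif_pos rfl

lemma cls_one : cls χ (1 : F) = 0 := by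
  rw [cls_of_ne_zero one_ne_zero, Units.mk0_one]
  exact (Submodule.Quotient.mk_eq_zero _).mpr
    (Submodule.subset_span (Or.inl (Or.inl (Or.inl rfl))))

lemma cls_inv (x : F) : cls χ x⁻¹ = -cls χ x := by
  rcases eq_or_ne x 0 with rfl | hx
  · simp
  rw [cls_of_ne_zero (inv_ne_zero hx), cls_of_ne_zero hx, eq_neg_iff_add_eq_zero,
    show Units.mk0 x⁻¹ (inv_ne_zero hx) = (Units.mk0 x hx)⁻¹ from Units.ext (by simp), add_comm]
  exact (Submodule.Quotient.mk_eq_zero _).mpr (Submodule.subset_span (Or.inr ⟨_, rfl⟩))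

lemma cls_neg_one : cls χ (-1 : F) = 0 :=
  Zhalf.eq_zero_of_add_self_eq_zero (by
    nth_rewrite 1 [← inv_neg_one]
    rw [cls_inv, neg_add_cancel])

lemma sgn_mul {x y : F} (hx : x ≠ 0) (hy : y ≠ 0) : sgn χ (x * y) = sgn χ x * sgn χ y := by
  rw [sgn_of_ne_zero (mul_ne_zero hx hy), sgn_of_ne_zero hx, sgn_of_ne_zero hy, Units.mk0_mul,
    map_mul]

lemma sgn_inv (x : F) : sgn χ x⁻¹ = sgn χ x := by
  rcases eq_or_ne x 0 with rfl | hx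
  · simp
  rw [sgn_of_ne_zero (inv_ne_zero hx), sgn_of_ne_zero hx,
    show Units.mk0 x⁻¹ (inv_ne_zero hx) = (Units.mk0 x hx)⁻¹ from Units.ext (by simp),
    map_inv, Int.units_inv_eq_self]

lemma sgn_div {x y : F} (hx : x ≠ 0) (hy : y ≠ 0) : sgn χ (x / y) = sgn χ x * sgn χ y := by
  rw [div_eq_mul_inv, sgn_mul hx (inv_ne_zero hy), sgn_inv]

lemma sgn_neg (hneg : χ (-1) = 1) (x : F) : sgn χ (-x) = sgn χ x := by
  rcases eq_or_ne x 0 with rfl | hx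
  · simp
  rw [neg_eq_neg_one_mul, sgn_mul (neg_ne_zero.mpr one_ne_zero) hx,
    sgn_of_ne_zero (neg_ne_zero.mpr one_ne_zero),
    show Units.mk0 (-1 : F) _ = -1 from Units.ext (by simp), hneg, one_mul]

lemma sgn_inv_sub_one {x : F} (hx0 : x ≠ 0) (hx1 : x ≠ 1) :
    sgn χ (x⁻¹ - 1) = sgn χ (1 - x) * sgn χ x := by
  rw [show x⁻¹ - 1 = (1 - x) / x by field_simp, sgn_div (sub_ne_zero.mpr hx1.symm) hx0]

lemma cls_five_term {x y : F} (hx0 : x ≠ 0) (hx1 : x ≠ 1) (hy0 : y ≠ 0) (hy1 : y ≠ 1)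
    (hxy : x ≠ y) :
    cls χ x - cls χ y + sgn χ x • cls χ (y / x) =
      sgn χ (1 - x) • (sgn χ x • cls χ ((1 - x⁻¹) / (1 - y⁻¹)) - cls χ ((1 - x) / (1 - y))) := by
  have h := (Submodule.Quotient.mk_eq_zero (rpSub F χ)).mpr (Submodule.subset_span
    (Or.inl (Or.inl (Or.inr ⟨x, y, hx0, hx1, hy0, hy1, hxy, rfl⟩))))
  simp only [Submodule.Quotient.mk_add, Submodule.Quotient.mk_sub, Submodule.Quotient.mk_smul,
    Int.cast_smul_eq_zsmul] at h
  change rpCls F χ _ - rpCls F χ _ + (_ : ℤ) • rpCls F χ _ - (_ : ℤ) • rpCls F χ _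
    + (_ : ℤ) • rpCls F χ _ = 0 at h
  rw [← cls_of_ne_zero, ← cls_of_ne_zero, ← cls_of_ne_zero, ← cls_of_ne_zero, ← cls_of_ne_zero,
    ← sgn_of_ne_zero, ← sgn_of_ne_zero, ← sgn_of_ne_zero, sgn_inv_sub_one hx0 hx1] at h
  simp only [Units.smul_def, Units.val_mul] at h ⊢
  linear_combination (norm := module) h

lemma cls_five_term_swap {x y : F} (hx0 : x ≠ 0) (hx1 : x ≠ 1) (hy0 : y ≠ 0) (hy1 : y ≠ 1)
    (hxy : x ≠ y) :
    cls χ x - cls χ y + sgn χ y • cls χ (y / x) =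
      sgn χ (1 - y) • (sgn χ y • cls χ ((1 - x⁻¹) / (1 - y⁻¹)) - cls χ ((1 - x) / (1 - y))) := by
  have h := cls_five_term (χ := χ) hy0 hy1 hx0 hx1 hxy.symm
  rw [← inv_div y, ← inv_div (1 - x⁻¹), ← inv_div (1 - x), cls_inv, cls_inv, cls_inv] at h
  simp only [Units.smul_def] at h ⊢
  linear_combination (norm := module) -h

lemma cls_five_term_of_sgn_one_sub_ne {x y : F} (hx0 : x ≠ 0) (hx1 : x ≠ 1) (hy0 : y ≠ 0)
    (hy1 : y ≠ 1) (hxy : x ≠ y) (hsgn : sgn χ x = sgn χ y)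
    (hne : sgn χ (1 - x) ≠ sgn χ (1 - y)) :
    cls χ x - cls χ y + sgn χ x • cls χ (y / x) = 0 ∧
      sgn χ x • cls χ ((1 - x⁻¹) / (1 - y⁻¹)) = cls χ ((1 - x) / (1 - y)) := by
  have h := cls_five_term (χ := χ) hx0 hx1 hy0 hy1 hxy
  have h' := cls_five_term_swap (χ := χ) hx0 hx1 hy0 hy1 hxy
  rw [← hsgn] at h'
  have hE := Zhalf.eq_zero_of_smul_eq_smul hne (h.symm.trans h')
  exact ⟨by rw [h, hE, smul_zero], sub_eq_zero.mp hE⟩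

lemma cls_mul_self {x : F} (hx0 : x ≠ 0) (hx1 : x ≠ 1) (hxm : x ≠ -1) (hx : sgn χ x = 1) :
    cls χ (x * x) = 2 • (cls χ x + sgn χ (1 - x) • cls χ (-x)) := by
  have hxx : x ≠ x⁻¹ := fun h => by
    have hsq : x * x = 1 := by nth_rewrite 2 [h]; exact mul_inv_cancel₀ hx0
    rcases mul_self_eq_one_iff.mp hsq with h | h
    exacts [hx1 h, hxm h]
  have h := cls_five_term (χ := χ) hx0 hx1 (inv_ne_zero hx0) (inv_ne_one.mpr hx1) hxx
  rw [inv_inv, div_eq_mul_inv, ← mul_inv, cls_inv, cls_inv, hx, one_smul, one_smul,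
    show (1 - x⁻¹) / (1 - x) = (-x)⁻¹ by field_simp; ring, cls_inv,
    show (1 - x) / (1 - x⁻¹) = -x by field_simp; ring] at h
  simp only [Units.smul_def] at h ⊢
  linear_combination (norm := module) -h

lemma ne_zero_of_sgn_eq_neg_one {x : F} (h : sgn χ x = -1) : x ≠ 0 := by
  rintro rfl
  simp [sgn] at h

lemma cls_eq_zero_of_sgn (hneg : χ (-1) = 1) {ℓ : F} (hℓ0 : ℓ ≠ 0) (hℓ : sgn χ ℓ = 1)
    (h1ℓ : sgn χ (1 - ℓ) = -1) : cls χ ℓ = 0 := by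
  have hℓ1 : ℓ ≠ 1 := fun h => ne_zero_of_sgn_eq_neg_one h1ℓ (by rw [h, sub_self])
  rcases eq_or_ne ℓ (-1) with rfl | hℓm
  · exact cls_neg_one
  have hℓ' : sgn χ (-ℓ) = 1 := by rw [sgn_neg hneg, hℓ]
  have E1 := cls_mul_self hℓ0 hℓ1 hℓm hℓ
  have E2 := cls_mul_self (neg_ne_zero.mpr hℓ0) (by rwa [Ne, neg_eq_iff_eq_neg])
    (by rwa [Ne, neg_inj]) hℓ'
  rw [h1ℓ] at E1
  rw [neg_mul_neg, neg_neg, sub_neg_eq_add] at E2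
  apply Zhalf.eq_zero_of_add_self_eq_zero
  apply Zhalf.eq_zero_of_add_self_eq_zero
  rcases Int.units_eq_one_or (sgn χ (1 + ℓ)) with ht | ht
  · have hℓℓ : ℓ ≠ -ℓ := fun h => by
      rw [← sub_neg_eq_add, ← h, h1ℓ] at ht
      exact absurd ht (by decide)
    have hD := (cls_five_term_of_sgn_one_sub_ne hℓ0 hℓ1 (neg_ne_zero.mpr hℓ0)
      (by rwa [Ne, neg_eq_iff_eq_neg]) hℓℓ (hℓ.trans hℓ'.symm)
      (by rw [sub_neg_eq_add, h1ℓ, ht]; decide)).1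
    rw [neg_div_self hℓ0, cls_neg_one, smul_zero, add_zero] at hD
    rw [ht] at E2
    simp only [Units.smul_def, Units.val_neg, Units.val_one] at E1 E2
    linear_combination (norm := module) E1 - E2 + (4 : ℤ) • hD
  · have hℓℓ1 : ℓ * ℓ ≠ 1 := fun h => by
      rcases mul_self_eq_one_iff.mp h with h | h
      exacts [hℓ1 h, hℓm h]
    have hD := (cls_five_term_of_sgn_one_sub_ne (mul_ne_zero hℓ0 hℓ0) hℓℓ1 hℓ0 hℓ1
      (fun h => hℓ1 (mul_left_cancel₀ hℓ0 (h.trans (mul_one ℓ).symm)))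
      (by rw [sgn_mul hℓ0 hℓ0, hℓ, mul_one])
      (by rw [show 1 - ℓ * ℓ = (1 - ℓ) * (1 + ℓ) by ring,
        sgn_mul (sub_ne_zero.mpr hℓ1.symm) (ne_zero_of_sgn_eq_neg_one ht), h1ℓ, ht]; decide)).1
    rw [sgn_mul hℓ0 hℓ0, hℓ, mul_one, one_smul, div_mul_cancel_left₀ hℓ0, cls_inv] at hD
    rw [ht] at E2
    simp only [Units.smul_def, Units.val_neg, Units.val_one] at E1 E2
    linear_combination (norm := module) E1 + E2 - (2 : ℤ) • hD

def partner (ℓ a : F) : F := (1 - a) / (1 - ℓ * a)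

section Partner

variable {ℓ a : F}

lemma one_sub_partner (hℓa : ℓ * a ≠ 1) : 1 - partner ℓ a = a * (1 - ℓ) / (1 - ℓ * a) := by
  have h : 1 - ℓ * a ≠ 0 := sub_ne_zero.mpr hℓa.symm
  rw [partner, eq_div_iff h, sub_mul, div_mul_cancel₀ _ h]
  ring

lemma one_sub_mul_partner (hℓa : ℓ * a ≠ 1) : 1 - ℓ * partner ℓ a = (1 - ℓ) / (1 - ℓ * a) := by
  have h : 1 - ℓ * a ≠ 0 := sub_ne_zero.mpr hℓa.symm
  rw [partner, eq_div_iff h, sub_mul, mul_assoc, div_mul_cancel₀ _ h]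
  ring

lemma partner_ne_zero (ha1 : a ≠ 1) (hℓa : ℓ * a ≠ 1) : partner ℓ a ≠ 0 :=
  div_ne_zero (sub_ne_zero.mpr ha1.symm) (sub_ne_zero.mpr hℓa.symm)

lemma partner_ne_one (hℓ1 : ℓ ≠ 1) (ha0 : a ≠ 0) (hℓa : ℓ * a ≠ 1) : partner ℓ a ≠ 1 := by
  intro h
  have h' := one_sub_partner hℓa
  rw [h, sub_self] at h'
  exact div_ne_zero (mul_ne_zero ha0 (sub_ne_zero.mpr hℓ1.symm)) (sub_ne_zero.mpr hℓa.symm)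
    h'.symm

lemma mul_partner_ne_one (hℓ1 : ℓ ≠ 1) (hℓa : ℓ * a ≠ 1) : ℓ * partner ℓ a ≠ 1 := by
  intro h
  have h' := one_sub_mul_partner hℓa
  rw [h, sub_self] at h'
  exact div_ne_zero (sub_ne_zero.mpr hℓ1.symm) (sub_ne_zero.mpr hℓa.symm) h'.symm

lemma partner_partner (hℓ1 : ℓ ≠ 1) (hℓa : ℓ * a ≠ 1) : partner ℓ (partner ℓ a) = a := by
  rw [partner, one_sub_partner hℓa, one_sub_mul_partner hℓa,
    div_div_div_cancel_right₀ (sub_ne_zero.mpr hℓa.symm),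
    mul_div_cancel_right₀ _ (sub_ne_zero.mpr hℓ1.symm)]

lemma one_sub_inv_div_one_sub_inv (hℓ0 : ℓ ≠ 0) (ha0 : a ≠ 0) (hℓa : ℓ * a ≠ 1) :
    (1 - a⁻¹) / (1 - (ℓ * a)⁻¹) = ℓ * partner ℓ a := by
  have : 1 - ℓ * a ≠ 0 := sub_ne_zero.mpr hℓa.symm
  rw [partner, ← mul_div_assoc, div_eq_div_iff (sub_ne_zero.mpr (inv_ne_one.mpr hℓa).symm) this]
  field_simp
  ring

end Partner

section Shift

variable {ℓ a : F}

lemma cls_sub_cls_mul (hℓ0 : ℓ ≠ 0) (hℓ1 : ℓ ≠ 1) (hcl : cls χ ℓ = 0) (ha0 : a ≠ 0)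
    (ha1 : a ≠ 1) (hℓa : ℓ * a ≠ 1) :
    cls χ a - cls χ (ℓ * a) =
      sgn χ (1 - a) • (sgn χ a • cls χ (ℓ * partner ℓ a) - cls χ (partner ℓ a)) := by
  have h := cls_five_term (χ := χ) ha0 ha1 (mul_ne_zero hℓ0 ha0) hℓa
    (fun h => hℓ1 ((mul_eq_right₀ ha0).mp h.symm))
  rw [mul_div_cancel_right₀ ℓ ha0, hcl, smul_zero, add_zero,
    one_sub_inv_div_one_sub_inv hℓ0 ha0 hℓa] at h
  exact h

lemma cls_mul_of_sgn_one_sub_ne (hℓ0 : ℓ ≠ 0) (hℓ1 : ℓ ≠ 1) (hℓ : sgn χ ℓ = 1)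
    (hcl : cls χ ℓ = 0) (ha0 : a ≠ 0) (ha1 : a ≠ 1) (hℓa : ℓ * a ≠ 1)
    (hs : sgn χ (1 - a) ≠ sgn χ (1 - ℓ * a)) : cls χ (ℓ * a) = cls χ a := by
  have h := (cls_five_term_of_sgn_one_sub_ne ha0 ha1 (mul_ne_zero hℓ0 ha0) hℓa
    (fun h => hℓ1 ((mul_eq_right₀ ha0).mp h.symm)) (by rw [sgn_mul hℓ0 ha0, hℓ, one_mul]) hs).1
  rw [mul_div_cancel_right₀ ℓ ha0, hcl, smul_zero, add_zero, sub_eq_zero] at h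
  exact h.symm

lemma cls_mul_of_sgn_one_sub_eq (hℓ0 : ℓ ≠ 0) (hℓ : sgn χ ℓ = 1) (h1ℓ : sgn χ (1 - ℓ) = -1)
    (hcl : cls χ ℓ = 0) (ha0 : a ≠ 0) (ha1 : a ≠ 1) (hℓa : ℓ * a ≠ 1)
    (hs : sgn χ (1 - a) = sgn χ (1 - ℓ * a)) : cls χ (ℓ * a) = cls χ a := by
  have hℓ1 : ℓ ≠ 1 := fun h => ne_zero_of_sgn_eq_neg_one h1ℓ (by rw [h, sub_self])
  have h1ℓ' : 1 - ℓ ≠ 0 := sub_ne_zero.mpr hℓ1.symm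
  have h1ℓa : 1 - ℓ * a ≠ 0 := sub_ne_zero.mpr hℓa.symm
  set b := partner ℓ a with hb
  have hb0 : b ≠ 0 := partner_ne_zero ha1 hℓa
  have hb1 : b ≠ 1 := partner_ne_one hℓ1 ha0 hℓa
  have hℓb : ℓ * b ≠ 1 := mul_partner_ne_one hℓ1 hℓa
  have hbb : partner ℓ b = a := partner_partner hℓ1 hℓa
  have hsb : sgn χ b = 1 := by
    rw [hb, partner, sgn_div (sub_ne_zero.mpr ha1.symm) h1ℓa, hs, Int.units_mul_self]
  have h1sb : sgn χ (1 - b) = -(sgn χ a * sgn χ (1 - a)) := by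
    rw [one_sub_partner hℓa, sgn_div (mul_ne_zero ha0 h1ℓ') h1ℓa, sgn_mul ha0 h1ℓ', h1ℓ, hs,
      mul_neg_one, neg_mul]
  rcases Int.units_eq_one_or (sgn χ a) with he | he
  · have ha := cls_sub_cls_mul hℓ0 hℓ1 hcl ha0 ha1 hℓa
    have hb' := cls_sub_cls_mul hℓ0 hℓ1 hcl hb0 hb1 hℓb
    rw [hbb, hsb, h1sb, he, one_mul, one_smul] at hb'
    rw [he, one_smul, ← hb] at ha
    rw [← sub_eq_zero]
    apply Zhalf.eq_zero_of_add_self_eq_zero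
    rcases Int.units_eq_one_or (sgn χ (1 - a)) with hs1 | hs1 <;> rw [hs1] at ha hb' <;>
      simp only [Units.smul_def, Units.val_neg, Units.val_one] at ha hb' <;>
      first
      | linear_combination (norm := module) hb' - ha
      | linear_combination (norm := module) -ha - hb'
  · have h1sℓb : sgn χ (1 - ℓ * b) = -sgn χ (1 - a) := by
      rw [one_sub_mul_partner hℓa, sgn_div h1ℓ' h1ℓa, h1ℓ, hs, neg_one_mul]
    have h := (cls_five_term_of_sgn_one_sub_ne hb0 hb1 (mul_ne_zero hℓ0 hb0) hℓb
      (fun h => hℓ1 ((mul_eq_right₀ hb0).mp h.symm)) (by rw [sgn_mul hℓ0 hb0, hℓ, one_mul])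
      (by rw [h1sb, h1sℓb, he]; simp)).2
    rw [one_sub_inv_div_one_sub_inv hℓ0 hb0 hℓb, hbb, hsb, one_smul] at h
    exact h.trans (congrArg (cls χ) hbb)

lemma cls_mul_of_sgn (hneg : χ (-1) = 1) (hℓ0 : ℓ ≠ 0) (hℓ : sgn χ ℓ = 1)
    (h1ℓ : sgn χ (1 - ℓ) = -1) (a : F) : cls χ (ℓ * a) = cls χ a := by
  have hℓ1 : ℓ ≠ 1 := fun h => ne_zero_of_sgn_eq_neg_one h1ℓ (by rw [h, sub_self])
  have hcl := cls_eq_zero_of_sgn hneg hℓ0 hℓ h1ℓ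
  rcases eq_or_ne a 0 with rfl | ha0
  · rw [mul_zero]
  rcases eq_or_ne a 1 with rfl | ha1
  · rw [mul_one, hcl, cls_one]
  rcases eq_or_ne (ℓ * a) 1 with hℓa | hℓa
  · rw [hℓa, cls_one, eq_inv_of_mul_eq_one_right hℓa, cls_inv, hcl, neg_zero]
  rcases eq_or_ne (sgn χ (1 - a)) (sgn χ (1 - ℓ * a)) with hs | hs
  · exact cls_mul_of_sgn_one_sub_eq hℓ0 hℓ h1ℓ hcl ha0 ha1 hℓa hs
  · exact cls_mul_of_sgn_one_sub_ne hℓ0 hℓ1 hℓ hcl ha0 ha1 hℓa hs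

end Shift

end RPplus

theorem stmt5_general (F : Type) [Field F]
    (χ : Fˣ →* ℤˣ) (hneg : χ (-1) = 1)
    (ℓ : F) (hℓ0 : ℓ ≠ 0) (hℓ1 : ℓ ≠ 1) :
    ((χ (Units.mk0 ℓ hℓ0) = 1 ∧
        χ (Units.mk0 (1 - ℓ) (sub_ne_zero.mpr (Ne.symm hℓ1))) = -1) →
      ∀ a : Fˣ, rpCls F χ a = rpCls F χ (Units.mk0 ℓ hℓ0 * a)) ∧
    ((χ (Units.mk0 ℓ hℓ0) = -1 ∧
        χ (Units.mk0 (1 - ℓ) (sub_ne_zero.mpr (Ne.symm hℓ1))) = -1) →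
      ∀ a : Fˣ, rpCls F χ a =
        rpCls F χ (Units.mk0 (1 - ℓ⁻¹)
          (sub_ne_zero.mpr (fun h => hℓ1 (inv_eq_one.mp h.symm))) * a)) := by
  have h1ℓ : 1 - ℓ ≠ 0 := sub_ne_zero.mpr hℓ1.symm
  refine ⟨fun ⟨hχℓ, hχ1ℓ⟩ a => ?_, fun ⟨hχℓ, hχ1ℓ⟩ a => ?_⟩
  · rw [← RPplus.sgn_of_ne_zero] at hχℓ hχ1ℓ
    rw [RPplus.rpCls_eq_cls, RPplus.rpCls_eq_cls, Units.val_mul, Units.val_mk0,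
      RPplus.cls_mul_of_sgn hneg hℓ0 hχℓ hχ1ℓ]
  · rw [← RPplus.sgn_of_ne_zero] at hχℓ hχ1ℓ
    have hℓ' : RPplus.sgn χ (1 - ℓ⁻¹) = 1 := by
      rw [show 1 - ℓ⁻¹ = -((1 - ℓ) / ℓ) by field_simp; ring, RPplus.sgn_neg hneg,
        RPplus.sgn_div h1ℓ hℓ0, hχℓ, hχ1ℓ]
      rfl
    have h1ℓ' : RPplus.sgn χ (1 - (1 - ℓ⁻¹)) = -1 := by
      rw [sub_sub_cancel, RPplus.sgn_inv, hχℓ]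
    rw [RPplus.rpCls_eq_cls, RPplus.rpCls_eq_cls, Units.val_mul, Units.val_mk0,
      RPplus.cls_mul_of_sgn hneg (sub_ne_zero.mpr (inv_ne_one.mpr hℓ1).symm) hℓ' h1ℓ']

/-- Let `F` be a field with at least `4` elements, `χ : F^× → {±1}` with
`χ(−1) = 1`, and `ℓ ∉ {0,1}`.  (a) If `χ(ℓ) = 1` and `χ(1 − ℓ) = −1` then
`[a] = [ℓ·a]` in `RP₊(F)[1/2]_χ` for all `a ∈ F^×`.  (b) If `χ(ℓ) = −1` and
`χ(1 − ℓ) = −1` then `[a] = [(1 − ℓ⁻¹)·a]` in `RP₊(F)[1/2]_χ` for all `a ∈ F^×`. -/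
theorem stmt5 (F : Type) [Field F] (h4 : 4 ≤ Cardinal.mk F)
    (χ : Fˣ →* ℤˣ) (hneg : χ (-1) = 1)
    (ℓ : F) (hℓ0 : ℓ ≠ 0) (hℓ1 : ℓ ≠ 1) :
    ((χ (Units.mk0 ℓ hℓ0) = 1 ∧
        χ (Units.mk0 (1 - ℓ) (sub_ne_zero.mpr (Ne.symm hℓ1))) = -1) →
      ∀ a : Fˣ, rpCls F χ a = rpCls F χ (Units.mk0 ℓ hℓ0 * a)) ∧
    ((χ (Units.mk0 ℓ hℓ0) = -1 ∧
        χ (Units.mk0 (1 - ℓ) (sub_ne_zero.mpr (Ne.symm hℓ1))) = -1) →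
      ∀ a : Fˣ, rpCls F χ a =
        rpCls F χ (Units.mk0 (1 - ℓ⁻¹)
          (sub_ne_zero.mpr (fun h => hℓ1 (inv_eq_one.mp h.symm))) * a)) :=
  stmt5_general F χ hneg ℓ hℓ0 hℓ1
end

section
/- Let m ∉ {0, 1} be a squarefree integer, let ω = ω_m and let 𝓞 = ℤ[ω] ⊂ ℂ be the ring of integers of the quadratic field ℚ(√m). Let α and β be non-associated prime elements of 𝓞, and let x ∈ {α, α⁻¹}, y ∈ {ωα, (ωα)⁻¹}, z ∈ {β, β⁻¹}, w ∈ {ωβ, (ωβ)⁻¹} (inverses taken in the field ℚ(√m)). Then 𝓞 ⊆ xℤ[x] + yℤ[y] + zℤ[z] + wℤ[w] as subsets of ℚ(√m). -/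
noncomputable section

/-- The complex square root of an integer `d` (equal to `i·√(−d)` when `d < 0`). -/
def sqrtC (d : ℤ) : ℂ :=
  if 0 ≤ d then ((Real.sqrt (d : ℝ) : ℝ) : ℂ) else Complex.I * ((Real.sqrt ((-d : ℤ) : ℝ) : ℝ) : ℂ)

/-- `ω_d ∈ ℂ`: the standard generator of the ring of integers of `ℚ(√d)` for a
squarefree integer `d`, namely `(1 + √d)/2` if `d ≡ 1 (mod 4)` and `√d` otherwise. -/
def omegaQ (d : ℤ) : ℂ :=
  if d % 4 = 1 then (1 + sqrtC d) / 2 else sqrtC d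

/-- The ring `ℤ[ω_d] = ℤ + ℤω_d`, as a subring of `ℂ`. -/
def quadRing (d : ℤ) : Subring ℂ := Subring.closure {omegaQ d}

end

/-- For a nonzero `e` in a field, `eℤ[e] := {e·p(e) : p ∈ ℤ[X]}`. -/
def zMulSet (e : ℂ) : Set ℂ := {t : ℂ | ∃ p : Polynomial ℤ, t = e * Polynomial.aeval e p}

/-!
Non-associated primes of `𝓞 = ℤ[ω]`, a domain of dimension one since it is integral over `ℤ`,
are coprime, so every `c ∈ 𝓞` can be written `c = (p + qω)α + (p' + q'ω)β` with `p, q, p', q' ∈ ℤ`.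
Each summand `k·e` has `e` integral over `ℤ`, so it lies in `eℤ[e]` and also in `e⁻¹ℤ[e⁻¹]`:
reversing a monic equation of `e` gives `1 + e⁻¹·r(e⁻¹) = 0`, hence `e = -r(e⁻¹)` and
`e = e⁻¹·r(e⁻¹)²`.
-/

open Polynomial

theorem IsIntegral.exists_eq_inv_mul_aeval_inv {R K : Type*} [CommRing R] [Field K] [Algebra R K]
    {e : K} (he : IsIntegral R e) : ∃ p : R[X], e = e⁻¹ * aeval e⁻¹ p := by
  rcases eq_or_ne e 0 with rfl | he0
  · exact ⟨0, by simp⟩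
  obtain ⟨f, hmonic, hf⟩ := he
  let := invertibleOfNonzero he0
  have hrev : e⁻¹ * aeval e⁻¹ f.reverse.divX + 1 = 0 := by
    have h := eval₂_reverse_mul_pow (algebraMap R K) e f
    rw [hf, invOf_eq_inv] at h
    have h' : aeval e⁻¹ f.reverse = 0 := (mul_eq_zero.mp h).resolve_right (pow_ne_zero _ he0)
    rw [← X_mul_divX_add f.reverse, coeff_zero_reverse, hmonic.leadingCoeff] at h'
    simpa using h'
  refine ⟨f.reverse.divX ^ 2, ?_⟩
  have hdivX : aeval e⁻¹ f.reverse.divX = -e := by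
    linear_combination e * hrev - aeval e⁻¹ f.reverse.divX * mul_inv_cancel₀ he0
  rw [map_pow, hdivX]
  field_simp

theorem intCast_mul_mem_zMulSet {e x : ℂ} (he : IsIntegral ℤ e) (hx : x = e ∨ x = e⁻¹) (k : ℤ) :
    (k : ℂ) * e ∈ zMulSet x := by
  rcases hx with rfl | rfl
  · exact ⟨C k, by simp [mul_comm]⟩
  · obtain ⟨p, hp⟩ := he.exists_eq_inv_mul_aeval_inv
    refine ⟨C k * p, ?_⟩
    rw [map_mul, aeval_C, algebraMap_int_eq, eq_intCast]
    conv_lhs => rw [hp]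
    ring

theorem Prime.isCoprime_of_not_associated {S : Type*} [CommRing S] [IsDomain S]
    [Ring.DimensionLEOne S] {a b : S} (ha : Prime a) (hb : Prime b) (hab : ¬Associated a b) :
    IsCoprime a b := by
  have hmax : (Ideal.span {a}).IsMaximal :=
    ((Ideal.span_singleton_prime ha.ne_zero).mpr ha).isMaximal
      (by simpa [Ideal.span_singleton_eq_bot] using ha.ne_zero)
  have hb_mem : b ∉ Ideal.span {a} := fun h =>
    hab (ha.associated_of_dvd hb (Ideal.mem_span_singleton.mp h))
  obtain ⟨v, i, hi, hvi⟩ := hmax.exists_inv hb_mem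
  obtain ⟨u, rfl⟩ := Ideal.mem_span_singleton'.mp hi
  exact ⟨u, v, by rw [← hvi]; ring⟩

section QuadRing

variable (m : ℤ)

theorem sqrtC_sq : sqrtC m ^ 2 = m := by
  unfold sqrtC
  split_ifs with h
  · rw [← Complex.ofReal_pow, Real.sq_sqrt (by exact_mod_cast h), Complex.ofReal_intCast]
  · have hm : (0 : ℝ) ≤ ((-m : ℤ) : ℝ) := by exact_mod_cast (by omega : 0 ≤ -m)
    rw [mul_pow, Complex.I_sq, ← Complex.ofReal_pow, Real.sq_sqrt hm]
    push_cast
    ring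

theorem exists_omegaQ_sq_eq : ∃ d₀ d₁ : ℤ, omegaQ m ^ 2 = d₀ + d₁ * omegaQ m := by
  unfold omegaQ
  split_ifs with h
  · obtain ⟨k, hk⟩ : (4 : ℤ) ∣ m - 1 := by omega
    have hkC : (m : ℂ) = 4 * k + 1 := by exact_mod_cast (by omega : m = 4 * k + 1)
    refine ⟨k, 1, ?_⟩
    linear_combination (sqrtC_sq m + hkC) / 4
  · exact ⟨m, 0, by simpa using sqrtC_sq m⟩

theorem isIntegral_omegaQ : IsIntegral ℤ (omegaQ m) := by
  obtain ⟨d₀, d₁, h⟩ := exists_omegaQ_sq_eq m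
  refine ⟨X ^ 2 - (C d₁ * X + C d₀), monic_X_pow_sub degree_linear_lt, ?_⟩
  rw [← aeval_def]
  simp only [map_sub, map_add, map_mul, map_pow, aeval_X, eq_intCast, map_intCast, h]
  ring

theorem isIntegral_coe_quadRing (g : quadRing m) : IsIntegral ℤ (g : ℂ) :=
  Subring.closure_le (t := (integralClosure ℤ ℂ).toSubring) |>.mpr
    (Set.singleton_subset_iff.mpr (isIntegral_omegaQ m)) g.2

instance : Algebra.IsIntegral ℤ (quadRing m) :=
  ⟨fun g => (isIntegral_algHom_iff (quadRing m).subtype.toIntAlgHom Subtype.coe_injective).mp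
    (isIntegral_coe_quadRing m g)⟩

instance : Ring.DimensionLEOne (quadRing m) := .of_isIntegral ℤ _

theorem exists_coe_eq_intCast_add_intCast_mul_omegaQ (g : quadRing m) :
    ∃ a b : ℤ, (g : ℂ) = a + b * omegaQ m := by
  obtain ⟨d₀, d₁, hω⟩ := exists_omegaQ_sq_eq m
  obtain ⟨g, hg⟩ := g
  induction hg using Subring.closure_induction with
  | mem x hx => exact ⟨0, 1, by simp [Set.mem_singleton_iff.mp hx]⟩
  | zero => exact ⟨0, 0, by simp⟩
  | one => exact ⟨1, 0, by simp⟩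
  | add x y _ _ ihx ihy =>
    obtain ⟨a, b, rfl⟩ := ihx
    obtain ⟨c, d, rfl⟩ := ihy
    exact ⟨a + c, b + d, by push_cast; ring⟩
  | neg x _ ihx =>
    obtain ⟨a, b, rfl⟩ := ihx
    exact ⟨-a, -b, by push_cast; ring⟩
  | mul x y _ _ ihx ihy =>
    obtain ⟨a, b, rfl⟩ := ihx
    obtain ⟨c, d, rfl⟩ := ihy
    exact ⟨a * c + b * d * d₀, a * d + b * c + b * d * d₁, by
      push_cast; linear_combination (b * d : ℂ) * hω⟩

end QuadRing

open Pointwise in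
theorem stmt10_general (m : ℤ)
    (α β : quadRing m) (hα : Prime α) (hβ : Prime β) (hab : ¬ Associated α β)
    (x y z w : ℂ)
    (hx : x = (α : ℂ) ∨ x = ((α : ℂ))⁻¹)
    (hy : y = omegaQ m * (α : ℂ) ∨ y = (omegaQ m * (α : ℂ))⁻¹)
    (hz : z = (β : ℂ) ∨ z = ((β : ℂ))⁻¹)
    (hw : w = omegaQ m * (β : ℂ) ∨ w = (omegaQ m * (β : ℂ))⁻¹) :
    ∀ c : quadRing m, (c : ℂ) ∈ zMulSet x + zMulSet y + zMulSet z + zMulSet w := by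
  intro c
  obtain ⟨u, v, huv⟩ := hα.isCoprime_of_not_associated hβ hab
  obtain ⟨p, q, hpq⟩ := exists_coe_eq_intCast_add_intCast_mul_omegaQ m (c * u)
  obtain ⟨p', q', hpq'⟩ := exists_coe_eq_intCast_add_intCast_mul_omegaQ m (c * v)
  have hc : (c : ℂ) = p * α + q * (omegaQ m * α) + p' * β + q' * (omegaQ m * β) := by
    have h := congrArg (fun g : quadRing m => ((c * g : quadRing m) : ℂ)) huv
    push_cast at h hpq hpq'
    linear_combination -h + α * hpq + β * hpq'
  have hαi := isIntegral_coe_quadRing m α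
  have hβi := isIntegral_coe_quadRing m β
  have hωi := isIntegral_omegaQ m
  rw [hc]
  exact Set.add_mem_add (Set.add_mem_add (Set.add_mem_add
    (intCast_mul_mem_zMulSet hαi hx p) (intCast_mul_mem_zMulSet (hωi.mul hαi) hy q))
    (intCast_mul_mem_zMulSet hβi hz p')) (intCast_mul_mem_zMulSet (hωi.mul hβi) hw q')

open Pointwise in
/-- Let `m ∉ {0,1}` be squarefree, `ω = ω_m`, `𝓞 = ℤ[ω]` the ring of
integers of `ℚ(√m)`.  If `α, β` are non-associated prime elements of `𝓞` and
`x ∈ {α, α⁻¹}`, `y ∈ {ωα, (ωα)⁻¹}`, `z ∈ {β, β⁻¹}`, `w ∈ {ωβ, (ωβ)⁻¹}`, then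
`𝓞 ⊆ xℤ[x] + yℤ[y] + zℤ[z] + wℤ[w]`. -/
theorem stmt10 (m : ℤ) (hm0 : m ≠ 0) (hm1 : m ≠ 1) (hsq : Squarefree m)
    (α β : quadRing m) (hα : Prime α) (hβ : Prime β) (hab : ¬ Associated α β)
    (x y z w : ℂ)
    (hx : x = (α : ℂ) ∨ x = ((α : ℂ))⁻¹)
    (hy : y = omegaQ m * (α : ℂ) ∨ y = (omegaQ m * (α : ℂ))⁻¹)
    (hz : z = (β : ℂ) ∨ z = ((β : ℂ))⁻¹)
    (hw : w = omegaQ m * (β : ℂ) ∨ w = (omegaQ m * (β : ℂ))⁻¹) :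
    ∀ c : quadRing m, (c : ℂ) ∈ zMulSet x + zMulSet y + zMulSet z + zMulSet w :=
  stmt10_general m α β hα hβ hab x y z w hx hy hz hw
end

section
/- Let m > 0 be a squarefree integer, let ω = ω_{−m} and let 𝓞 = ℤ[ω] ⊂ ℂ be the ring of integers of the imaginary quadratic field ℚ(√(−m)). Let α and β be non-associated prime elements of 𝓞, and let x ∈ {α, α⁻¹}, y ∈ {β, β⁻¹}, z ∈ {ω, ω⁻¹} (inverses taken in the field ℚ(√(−m))). Then 𝓞 ⊆ xℤ[x] + yℤ[y] + zℤ[z] as subsets of ℚ(√(−m)). -/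
/-!
Write `ω² = tω − n`. Every `e ∈ 𝓞` satisfies `e² = Te − N(e)` with `T, N(e) ∈ ℤ`, so `eℤ[e]`
contains `e` and `N(e)`, `e⁻¹ℤ[e⁻¹]` contains `1`, and `ω⁻¹ℤ[ω⁻¹]` contains `ω = t − nω⁻¹`.
Hence the ℤ-module `xℤ[x] + yℤ[y] + zℤ[z]` contains `ω`, and contains `1` unless `x = α`,
`y = β`, `z = ω`. In that case it contains the first coordinates `a₁, b₁` of `α = a₁ + a₂ω`,
`β = b₁ + b₂ω` and the norms `N(α), N(β)`, and these have no common prime factor `p`: both `α`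
and `β` would divide `p`, and `p ∣ a₁b₂ − a₂b₁ = b₂α − a₂β` would give `α ∣ a₂β`, hence
`α ∣ a₂`, so `p ∣ a₂`, `α ∼ p` and `β ∣ α`.
-/

open Polynomial

theorem Int.ideal_eq_top_of_forall_prime {I : Ideal ℤ}
    (h : ∀ p : ℤ, Prime p → ¬I ≤ Ideal.span {p}) : I = ⊤ := by
  obtain ⟨g, rfl⟩ := Submodule.IsPrincipal.principal I
  by_contra hg
  have hg1 : g.natAbs ≠ 1 := fun h1 =>
    hg (Ideal.span_singleton_eq_top.mpr (Int.isUnit_iff_natAbs_eq.mpr h1))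
  obtain ⟨p, hp, hpg⟩ := Int.exists_prime_and_dvd hg1
  exact h p hp (Ideal.span_singleton_le_span_singleton.mpr hpg)

namespace QuadraticAlgebra

variable {a b : ℤ}

theorem intCast_dvd_iff {p : ℤ} {z : QuadraticAlgebra ℤ a b} :
    (p : QuadraticAlgebra ℤ a b) ∣ z ↔ p ∣ z.re ∧ p ∣ z.im := by
  constructor
  · rintro ⟨w, rfl⟩
    simp
  · rintro ⟨⟨u, hu⟩, ⟨v, hv⟩⟩
    exact ⟨⟨u, v⟩, by ext <;> simp [hu, hv]⟩

theorem not_isUnit_intCast {p : ℤ} (hp : ¬IsUnit p) : ¬IsUnit (p : QuadraticAlgebra ℤ a b) := by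
  rwa [isUnit_iff_norm_isUnit, norm_intCast, isUnit_pow_iff two_ne_zero]

variable [IsDomain (QuadraticAlgebra ℤ a b)] {α β : QuadraticAlgebra ℤ a b}

theorem norm_ne_zero (hα : α ≠ 0) : norm α ≠ 0 :=
  nonZeroDivisors.ne_zero (norm_mem_nonZeroDivisors_iff.mpr (mem_nonZeroDivisors_of_ne_zero hα))

theorem exists_prime_dvd_intCast_of_prime (hα : Prime α) :
    ∃ q : ℤ, Prime q ∧ α ∣ (q : QuadraticAlgebra ℤ a b) := by
  let P := (Ideal.span {α}).comap (algebraMap ℤ (QuadraticAlgebra ℤ a b))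
  have : P.IsPrime := ((Ideal.span_singleton_prime hα.ne_zero).mpr hα).comap _
  have hP : P ≠ ⊥ := by
    refine (Submodule.ne_bot_iff P).mpr ⟨norm α, ?_, norm_ne_zero hα.ne_zero⟩
    rw [Ideal.mem_comap, Ideal.mem_span_singleton, algebraMap_norm_eq_mul_star]
    exact dvd_mul_right α _
  refine ⟨Submodule.IsPrincipal.generator P,
    Submodule.IsPrincipal.prime_generator_of_isPrime P hP, ?_⟩
  have hg := Submodule.IsPrincipal.generator_mem P
  rwa [Ideal.mem_comap, Ideal.mem_span_singleton, algebraMap_int_eq, eq_intCast] at hg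

theorem dvd_intCast_of_prime_dvd_norm (hα : Prime α) {p : ℤ} (hp : Prime p) (hpα : p ∣ norm α) :
    α ∣ (p : QuadraticAlgebra ℤ a b) := by
  obtain ⟨q, hq, hαq⟩ := exists_prime_dvd_intCast_of_prime hα
  have hpq : p ∣ q := by
    refine hp.dvd_of_dvd_pow (n := 2) (hpα.trans ?_)
    simpa using map_dvd norm hαq
  exact hαq.trans ((hp.associated_of_dvd hq hpq).map (Int.castRingHom _)).symm.dvd

theorem associated_intCast_of_dvd_im (hα : Prime α) {p : ℤ} (hp : Prime p) (hre : p ∣ α.re)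
    (hN : p ∣ norm α) (him : α ∣ (α.im : QuadraticAlgebra ℤ a b)) :
    Associated (p : QuadraticAlgebra ℤ a b) α := by
  have hpim : p ∣ α.im := by
    refine hp.dvd_of_dvd_pow (n := 2) (hN.trans ?_)
    simpa using map_dvd norm him
  obtain ⟨γ, hαγ⟩ := intCast_dvd_iff.mpr ⟨hre, hpim⟩
  have hγ : IsUnit γ := (hα.irreducible.isUnit_or_isUnit hαγ).resolve_left
    (not_isUnit_intCast hp.not_isUnit)
  exact ⟨hγ.unit, hαγ.symm⟩

theorem span_re_re_norm_norm_eq_top (hα : Prime α) (hβ : Prime β) (hαβ : ¬Associated α β) :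
    Ideal.span {α.re, β.re, norm α, norm β} = ⊤ := by
  refine Int.ideal_eq_top_of_forall_prime fun p hp hle => ?_
  simp only [Ideal.span_le, Set.insert_subset_iff, Set.singleton_subset_iff, SetLike.mem_coe,
    Ideal.mem_span_singleton] at hle
  obtain ⟨hαre, hβre, hαN, hβN⟩ := hle
  have hαp := dvd_intCast_of_prime_dvd_norm hα hp hαN
  have hβp := dvd_intCast_of_prime_dvd_norm hβ hp hβN
  have hcross : (β.im : QuadraticAlgebra ℤ a b) * α - α.im * β =
      ((β.im * α.re - α.im * β.re : ℤ) : QuadraticAlgebra ℤ a b) := by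
    ext <;> simp [mul_comm]
  have hαim : α ∣ (α.im : QuadraticAlgebra ℤ a b) := by
    have : α ∣ (α.im : QuadraticAlgebra ℤ a b) * β := by
      refine (dvd_sub_right (dvd_mul_left α (β.im : QuadraticAlgebra ℤ a b))).mp ?_
      rw [hcross]
      exact hαp.trans (Int.cast_dvd_cast _ _ (dvd_sub (hαre.mul_left _) (hβre.mul_left _)))
    exact (hα.dvd_or_dvd this).resolve_right fun h => hαβ (hα.associated_of_dvd hβ h)
  have hpα := associated_intCast_of_dvd_im hα hp hαre hαN hαim
  exact hαβ (hβ.associated_of_dvd hα (hβp.trans hpα.dvd)).symm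

end QuadraticAlgebra

noncomputable def zMulSpan (e : ℂ) : Submodule ℤ ℂ :=
  LinearMap.range (LinearMap.mulLeft ℤ e ∘ₗ (aeval e).toLinearMap)

theorem mem_zMulSpan {e c : ℂ} : c ∈ zMulSpan e ↔ ∃ p : ℤ[X], e * aeval e p = c := Iff.rfl

theorem coe_zMulSpan (e : ℂ) : (zMulSpan e : Set ℂ) = zMulSet e := by
  ext c
  simp [mem_zMulSpan, zMulSet, eq_comm]

theorem self_mem_zMulSpan (e : ℂ) : e ∈ zMulSpan e := mem_zMulSpan.mpr ⟨1, by simp⟩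

section SqEq

variable {e : ℂ} {T N : ℤ}

theorem intCast_mem_zMulSpan_of_sq_eq (h : e ^ 2 = T * e - N) : (N : ℂ) ∈ zMulSpan e :=
  mem_zMulSpan.mpr ⟨(T : ℤ[X]) - X, by
    simp only [map_sub, map_intCast, aeval_X]
    linear_combination -h⟩

theorem one_mem_zMulSpan_inv_of_sq_eq (he : e ≠ 0) (h : e ^ 2 = T * e - N) :
    1 ∈ zMulSpan e⁻¹ :=
  mem_zMulSpan.mpr ⟨(T : ℤ[X]) - (N : ℤ[X]) * X, by
    simp only [map_sub, map_mul, map_intCast, aeval_X]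
    field_simp
    linear_combination -h⟩

theorem mem_zMulSpan_inv_of_sq_eq (he : e ≠ 0) (h : e ^ 2 = T * e - N) : e ∈ zMulSpan e⁻¹ := by
  have he' : e = T • 1 - N • e⁻¹ := by
    rw [zsmul_eq_mul, zsmul_eq_mul, mul_one]
    field_simp
    linear_combination h
  have hmem : T • (1 : ℂ) - N • e⁻¹ ∈ zMulSpan e⁻¹ :=
    sub_mem (Submodule.smul_mem _ _ (one_mem_zMulSpan_inv_of_sq_eq he h))
      (Submodule.smul_mem _ _ (self_mem_zMulSpan _))
  rwa [← he'] at hmem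

end SqEq

section Embedding

variable {ω : ℂ} {t n : ℤ}

noncomputable def quadraticAlgebraToComplex (hω : ω ^ 2 = t * ω - n) :
    QuadraticAlgebra ℤ (-n) t →ₐ[ℤ] ℂ :=
  QuadraticAlgebra.lift ⟨ω, by simp only [zsmul_eq_mul]; push_cast; linear_combination hω⟩

theorem quadraticAlgebraToComplex_apply (hω : ω ^ 2 = t * ω - n)
    (z : QuadraticAlgebra ℤ (-n) t) : quadraticAlgebraToComplex hω z = z.re + z.im * ω := by
  simp [quadraticAlgebraToComplex]

theorem quadraticAlgebraToComplex_injective (hω : ω ^ 2 = t * ω - n) (him : ω.im ≠ 0) :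
    Function.Injective (quadraticAlgebraToComplex hω) := by
  refine (injective_iff_map_eq_zero _).mpr fun z hz => ?_
  rw [quadraticAlgebraToComplex_apply] at hz
  have hzim : z.im = 0 := by
    have := congrArg Complex.im hz
    simp only [Complex.add_im, Complex.intCast_im, Complex.mul_im, Complex.intCast_re, zero_mul,
      add_zero, zero_add, Complex.zero_im] at this
    exact_mod_cast (mul_eq_zero.mp this).resolve_right him
  have hzre : z.re = 0 := by simpa [hzim] using hz
  ext <;> simp [hzre, hzim]

theorem range_quadraticAlgebraToComplex (hω : ω ^ 2 = t * ω - n) :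
    (quadraticAlgebraToComplex hω).toRingHom.range = Subring.closure {ω} := by
  apply le_antisymm
  · rintro _ ⟨z, rfl⟩
    rw [AlgHom.toRingHom_eq_coe, RingHom.coe_coe, quadraticAlgebraToComplex_apply]
    exact add_mem (intCast_mem _ _) (mul_mem (intCast_mem _ _) (Subring.subset_closure rfl))
  · refine Subring.closure_le.mpr (Set.singleton_subset_iff.mpr ⟨QuadraticAlgebra.omega, ?_⟩)
    simp [quadraticAlgebraToComplex_apply]

noncomputable def quadraticAlgebraEquivClosure (hω : ω ^ 2 = t * ω - n) (him : ω.im ≠ 0) :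
    QuadraticAlgebra ℤ (-n) t ≃+* Subring.closure {ω} :=
  (RingEquiv.ofBijective (quadraticAlgebraToComplex hω).toRingHom.rangeRestrict
    ⟨fun _ _ h => quadraticAlgebraToComplex_injective hω him (congrArg Subtype.val h),
      RingHom.rangeRestrict_surjective _⟩).trans
    (RingEquiv.subringCongr (range_quadraticAlgebraToComplex hω))

theorem coe_quadraticAlgebraEquivClosure (hω : ω ^ 2 = t * ω - n) (him : ω.im ≠ 0)
    (z : QuadraticAlgebra ℤ (-n) t) :
    (quadraticAlgebraEquivClosure hω him z : ℂ) = z.re + z.im * ω :=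
  quadraticAlgebraToComplex_apply hω z

theorem coe_eq_re_add_im_mul (hω : ω ^ 2 = t * ω - n) (him : ω.im ≠ 0)
    (γ : Subring.closure {ω}) :
    (γ : ℂ) = ((quadraticAlgebraEquivClosure hω him).symm γ).re
      + ((quadraticAlgebraEquivClosure hω him).symm γ).im * ω := by
  rw [← coe_quadraticAlgebraEquivClosure hω him, RingEquiv.apply_symm_apply]

theorem coe_sq_eq_trace_mul_sub_norm (hω : ω ^ 2 = t * ω - n) (him : ω.im ≠ 0)
    (γ : Subring.closure {ω}) :
    (γ : ℂ) ^ 2 = QuadraticAlgebra.trace ((quadraticAlgebraEquivClosure hω him).symm γ) * γ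
      - QuadraticAlgebra.norm ((quadraticAlgebraEquivClosure hω him).symm γ) := by
  set e := quadraticAlgebraEquivClosure hω him
  have h := congrArg (fun w => (e w : ℂ))
    (QuadraticAlgebra.sq_eq_trace_smul_sub_norm (e.symm γ))
  simpa [Algebra.smul_def] using h

theorem closure_subset_of_one_mem_of_mem (hω : ω ^ 2 = t * ω - n) {M : Submodule ℤ ℂ}
    (h1 : (1 : ℂ) ∈ M) (hωM : ω ∈ M) : (Subring.closure {ω} : Set ℂ) ⊆ M := by
  rw [← range_quadraticAlgebraToComplex hω]
  rintro _ ⟨z, rfl⟩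
  rw [AlgHom.toRingHom_eq_coe, RingHom.coe_coe, quadraticAlgebraToComplex_apply,
    ← mul_one (z.re : ℂ), ← zsmul_eq_mul, ← zsmul_eq_mul]
  exact add_mem (M.smul_mem _ h1) (M.smul_mem _ hωM)

theorem one_mem_zMulSpan_sup (hω : ω ^ 2 = t * ω - n) (him : ω.im ≠ 0)
    {α β : Subring.closure {ω}} (hα : Prime α) (hβ : Prime β) (hαβ : ¬Associated α β) :
    (1 : ℂ) ∈ zMulSpan α ⊔ zMulSpan β ⊔ zMulSpan ω := by
  set e := quadraticAlgebraEquivClosure hω him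
  have : IsDomain (QuadraticAlgebra ℤ (-n) t) := e.injective.isDomain
  set S := zMulSpan α ⊔ zMulSpan β ⊔ zMulSpan ω
  have hre (γ : Subring.closure {ω}) (hγ : (γ : ℂ) ∈ S) : ((e.symm γ).re : ℂ) ∈ S := by
    have hγre : ((e.symm γ).re : ℂ) = γ - (e.symm γ).im • ω := by
      rw [zsmul_eq_mul, coe_eq_re_add_im_mul hω him γ]
      ring
    rw [hγre]
    exact sub_mem hγ (S.smul_mem _ (Submodule.mem_sup_right (self_mem_zMulSpan ω)))
  have hspan := QuadraticAlgebra.span_re_re_norm_norm_eq_top ((MulEquiv.prime_iff e.symm).mpr hα)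
    ((MulEquiv.prime_iff e.symm).mpr hβ) fun h => hαβ (by simpa using h.map e)
  have hle : Ideal.span {(e.symm α).re, (e.symm β).re, QuadraticAlgebra.norm (e.symm α),
      QuadraticAlgebra.norm (e.symm β)} ≤ S.comap (Algebra.linearMap ℤ ℂ) := by
    simp only [Ideal.span_le, Set.insert_subset_iff, Set.singleton_subset_iff, SetLike.mem_coe,
      Submodule.mem_comap, Algebra.linearMap_apply, algebraMap_int_eq, eq_intCast]
    refine ⟨hre α ?_, hre β ?_, ?_, ?_⟩
    · exact Submodule.mem_sup_left (Submodule.mem_sup_left (self_mem_zMulSpan _))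
    · exact Submodule.mem_sup_left (Submodule.mem_sup_right (self_mem_zMulSpan _))
    · exact Submodule.mem_sup_left (Submodule.mem_sup_left
        (intCast_mem_zMulSpan_of_sq_eq (coe_sq_eq_trace_mul_sub_norm hω him α)))
    · exact Submodule.mem_sup_left (Submodule.mem_sup_right
        (intCast_mem_zMulSpan_of_sq_eq (coe_sq_eq_trace_mul_sub_norm hω him β)))
  simpa using hle (hspan ▸ Submodule.mem_top : (1 : ℤ) ∈ Ideal.span _)

end Embedding

theorem exists_sq_eq_omegaQ_neg (m : ℤ) (hm : 0 < m) :
    ∃ t n : ℤ, omegaQ (-m) ^ 2 = t * omegaQ (-m) - n ∧ (omegaQ (-m)).im ≠ 0 := by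
  have hmr : (0 : ℝ) < m := by exact_mod_cast hm
  set r : ℝ := Real.sqrt m
  have hrpos : 0 < r := Real.sqrt_pos.mpr hmr
  have hsqrt : sqrtC (-m) = Complex.I * r := by
    simp [sqrtC, hm, r]
  have hr : (r : ℂ) ^ 2 = m := by
    rw [← Complex.ofReal_pow, Real.sq_sqrt hmr.le, Complex.ofReal_intCast]
  by_cases h4 : (-m) % 4 = 1
  · have hn : (((m + 1) / 4 : ℤ) : ℂ) * 4 = m + 1 := by
      rw_mod_cast [Int.ediv_mul_cancel (by omega)]
    rw [omegaQ, if_pos h4, hsqrt]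
    refine ⟨1, (m + 1) / 4, ?_, by simp [hrpos.ne']⟩
    linear_combination ((r : ℂ) ^ 2 / 4) * Complex.I_sq - hr / 4 + hn / 4
  · rw [omegaQ, if_neg h4, hsqrt]
    refine ⟨0, m, ?_, by simp [hrpos.ne']⟩
    push_cast
    linear_combination (r : ℂ) ^ 2 * Complex.I_sq - hr

open Pointwise in
theorem stmt11_general (m : ℤ) (hm : 0 < m)
    (α β : quadRing (-m)) (hα : Prime α) (hβ : Prime β) (hab : ¬ Associated α β)
    (x y z : ℂ)
    (hx : x = (α : ℂ) ∨ x = ((α : ℂ))⁻¹)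
    (hy : y = (β : ℂ) ∨ y = ((β : ℂ))⁻¹)
    (hz : z = omegaQ (-m) ∨ z = (omegaQ (-m))⁻¹) :
    ∀ c : quadRing (-m), (c : ℂ) ∈ zMulSet x + zMulSet y + zMulSet z := by
  obtain ⟨t, n, hω, him⟩ := exists_sq_eq_omegaQ_neg m hm
  have hω0 : omegaQ (-m) ≠ 0 := fun h => him (by simp [h])
  have hinv (γ : quadRing (-m)) (hγ : Prime γ) : (1 : ℂ) ∈ zMulSpan (γ : ℂ)⁻¹ :=
    one_mem_zMulSpan_inv_of_sq_eq (by simpa using hγ.ne_zero)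
      (coe_sq_eq_trace_mul_sub_norm hω him γ)
  have hone : (1 : ℂ) ∈ zMulSpan x ⊔ zMulSpan y ⊔ zMulSpan z := by
    rcases hz with rfl | rfl
    · rcases hx with rfl | rfl
      · rcases hy with rfl | rfl
        · exact one_mem_zMulSpan_sup hω him hα hβ hab
        · exact Submodule.mem_sup_left (Submodule.mem_sup_right (hinv β hβ))
      · exact Submodule.mem_sup_left (Submodule.mem_sup_left (hinv α hα))
    · exact Submodule.mem_sup_right (one_mem_zMulSpan_inv_of_sq_eq hω0 hω)
  have homega : omegaQ (-m) ∈ zMulSpan x ⊔ zMulSpan y ⊔ zMulSpan z := by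
    rcases hz with rfl | rfl
    · exact Submodule.mem_sup_right (self_mem_zMulSpan _)
    · exact Submodule.mem_sup_right (mem_zMulSpan_inv_of_sq_eq hω0 hω)
  intro c
  rw [← coe_zMulSpan, ← coe_zMulSpan, ← coe_zMulSpan, ← Submodule.coe_sup, ← Submodule.coe_sup]
  exact closure_subset_of_one_mem_of_mem hω hone homega c.2

open Pointwise in
/-- Let `m > 0` be squarefree, `ω = ω_{−m}`, `𝓞 = ℤ[ω]` the ring of
integers of `ℚ(√(−m))`.  If `α, β` are non-associated prime elements of `𝓞` and
`x ∈ {α, α⁻¹}`, `y ∈ {β, β⁻¹}`, `z ∈ {ω, ω⁻¹}`, then `𝓞 ⊆ xℤ[x] + yℤ[y] + zℤ[z]`. -/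
theorem stmt11 (m : ℤ) (hm : 0 < m) (hsq : Squarefree m)
    (α β : quadRing (-m)) (hα : Prime α) (hβ : Prime β) (hab : ¬ Associated α β)
    (x y z : ℂ)
    (hx : x = (α : ℂ) ∨ x = ((α : ℂ))⁻¹)
    (hy : y = (β : ℂ) ∨ y = ((β : ℂ))⁻¹)
    (hz : z = omegaQ (-m) ∨ z = (omegaQ (-m))⁻¹) :
    ∀ c : quadRing (-m), (c : ℂ) ∈ zMulSet x + zMulSet y + zMulSet z :=
  stmt11_general m hm α β hα hβ hab x y z hx hy hz
end

section
/- Let m > 0 be a squarefree integer and let 𝓞 = ℤ[ω_{−m}] ⊂ ℂ be the ring of integers of the imaginary quadratic field ℚ(√(−m)). Let α, β ∈ 𝓞 be elements such that N(α) and N(β) are distinct rational primes (where N denotes the norm N(γ) = γ·γ̄). Then ℤ ⊆ αℤ[α] + βℤ[β] as subsets of ℚ(√(−m)); in particular 1 ∈ αℤ[α] + βℤ[β]. -/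
open Polynomial

lemma sqrtC_neg_sq {m : ℤ} (hm : 0 < m) : sqrtC (-m) ^ 2 = -(m : ℂ) := by
  rw [sqrtC, if_neg (by omega), mul_pow, Complex.I_sq, neg_neg, ← Complex.ofReal_pow,
    Real.sq_sqrt (by exact_mod_cast hm.le)]
  push_cast
  ring

lemma conj_sqrtC_neg {m : ℤ} (hm : 0 < m) :
    starRingEnd ℂ (sqrtC (-m)) = -sqrtC (-m) := by
  rw [sqrtC, if_neg (by omega)]
  simp [Complex.conj_I]

lemma exists_omegaQ_sq_eq_and_conj_eq {m : ℤ} (hm : 0 < m) :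
    ∃ s t : ℤ, omegaQ (-m) ^ 2 = s + t * omegaQ (-m) ∧
      starRingEnd ℂ (omegaQ (-m)) = t - omegaQ (-m) := by
  have hsq := sqrtC_neg_sq hm
  have hconj := conj_sqrtC_neg hm
  unfold omegaQ
  split_ifs with h4
  · obtain ⟨k, hk⟩ : (4 : ℤ) ∣ m + 1 := by omega
    have hkC : (m : ℂ) + 1 = 4 * k := by exact_mod_cast hk
    refine ⟨-k, 1, ?_, ?_⟩
    · push_cast
      linear_combination (1 / 4 : ℂ) * hsq - (1 / 4 : ℂ) * hkC
    · rw [map_div₀, map_add, hconj, map_one, map_ofNat]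
      push_cast
      ring
  · exact ⟨-m, 0, by push_cast; linear_combination hsq, by rw [hconj]; push_cast; ring⟩

lemma exists_eq_intCast_add_intCast_mul_of_mem_closure {ω x : ℂ} {s t : ℤ}
    (hω : ω ^ 2 = s + t * ω) (hx : x ∈ Subring.closure {ω}) :
    ∃ a b : ℤ, x = a + b * ω := by
  induction hx using Subring.closure_induction with
  | mem y hy =>
    rw [Set.mem_singleton_iff] at hy
    exact ⟨0, 1, by rw [hy]; push_cast; ring⟩
  | zero => exact ⟨0, 0, by push_cast; ring⟩
  | one => exact ⟨1, 0, by push_cast; ring⟩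
  | add x y _ _ ihx ihy =>
    obtain ⟨a, b, rfl⟩ := ihx
    obtain ⟨c, d, rfl⟩ := ihy
    exact ⟨a + c, b + d, by push_cast; ring⟩
  | neg x _ ihx =>
    obtain ⟨a, b, rfl⟩ := ihx
    exact ⟨-a, -b, by push_cast; ring⟩
  | mul x y _ _ ihx ihy =>
    obtain ⟨a, b, rfl⟩ := ihx
    obtain ⟨c, d, rfl⟩ := ihy
    exact ⟨a * c + b * d * s, a * d + b * c + b * d * t, by
      push_cast; linear_combination (b * d : ℂ) * hω⟩

lemma exists_conj_eq_intCast_sub_of_mem_quadRing {m : ℤ} (hm : 0 < m) {x : ℂ}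
    (hx : x ∈ quadRing (-m)) : ∃ t : ℤ, starRingEnd ℂ x = t - x := by
  obtain ⟨s, t, hsq, hconj⟩ := exists_omegaQ_sq_eq_and_conj_eq hm
  obtain ⟨a, b, rfl⟩ := exists_eq_intCast_add_intCast_mul_of_mem_closure hsq hx
  refine ⟨2 * a + b * t, ?_⟩
  rw [map_add, map_mul, map_intCast, map_intCast, hconj]
  push_cast
  ring

lemma intCast_mul_norm_mem_zMulSet {e : ℂ} {t : ℤ} (he : starRingEnd ℂ e = t - e) (k : ℤ) :
    k * (e * starRingEnd ℂ e) ∈ zMulSet e :=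
  ⟨C k * (C t - X), by simp [he, mul_left_comm]⟩

open Pointwise in
theorem stmt12_general (m : ℤ) (hm : 0 < m)
    (α β : quadRing (-m)) (p q : ℕ) (hp : Nat.Prime p) (hq : Nat.Prime q) (hpq : p ≠ q)
    (hNα : (α : ℂ) * (starRingEnd ℂ) (α : ℂ) = (p : ℂ))
    (hNβ : (β : ℂ) * (starRingEnd ℂ) (β : ℂ) = (q : ℂ)) :
    (∀ n : ℤ, (n : ℂ) ∈ zMulSet (α : ℂ) + zMulSet (β : ℂ)) ∧
      (1 : ℂ) ∈ zMulSet (α : ℂ) + zMulSet (β : ℂ) := by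
  obtain ⟨tα, hα⟩ := exists_conj_eq_intCast_sub_of_mem_quadRing hm α.2
  obtain ⟨tβ, hβ⟩ := exists_conj_eq_intCast_sub_of_mem_quadRing hm β.2
  obtain ⟨u, v, huv⟩ : IsCoprime (p : ℤ) q :=
    Int.isCoprime_iff_gcd_eq_one.mpr ((Nat.coprime_primes hp hq).mpr hpq)
  have huvC : (u : ℂ) * p + v * q = 1 := by exact_mod_cast huv
  have hint : ∀ n : ℤ, (n : ℂ) ∈ zMulSet (α : ℂ) + zMulSet (β : ℂ) := by
    intro n
    have hn : (n : ℂ) =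
        (n * u : ℤ) * (α * starRingEnd ℂ α) + (n * v : ℤ) * (β * starRingEnd ℂ β) := by
      rw [hNα, hNβ]
      push_cast
      linear_combination (-n : ℂ) * huvC
    rw [hn]
    exact Set.add_mem_add (intCast_mul_norm_mem_zMulSet hα _) (intCast_mul_norm_mem_zMulSet hβ _)
  exact ⟨hint, by exact_mod_cast hint 1⟩

open Pointwise in
/-- Let `m > 0` be squarefree and `𝓞 = ℤ[ω_{−m}]` the ring of integers of
the imaginary quadratic field `ℚ(√(−m))`.  If `α, β ∈ 𝓞` have norms `N(α) = α·ᾱ` and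
`N(β) = β·β̄` which are distinct rational primes, then `ℤ ⊆ αℤ[α] + βℤ[β]`;
in particular `1 ∈ αℤ[α] + βℤ[β]`. -/
theorem stmt12 (m : ℤ) (hm : 0 < m) (hsq : Squarefree m)
    (α β : quadRing (-m)) (p q : ℕ) (hp : Nat.Prime p) (hq : Nat.Prime q) (hpq : p ≠ q)
    (hNα : (α : ℂ) * (starRingEnd ℂ) (α : ℂ) = (p : ℂ))
    (hNβ : (β : ℂ) * (starRingEnd ℂ) (β : ℂ) = (q : ℂ)) :
    (∀ n : ℤ, (n : ℂ) ∈ zMulSet (α : ℂ) + zMulSet (β : ℂ)) ∧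
      (1 : ℂ) ∈ zMulSet (α : ℂ) + zMulSet (β : ℂ) :=
  stmt12_general m hm α β p q hp hq hpq hNα hNβ
end

section
/- Let G be a multiplicative abelian group in which g² = 1 for every g ∈ G, and let H ≤ G be a subgroup. Let M and N be ℤ[G]-modules on which multiplication by 2 is bijective, and let f : M → N be a ℤ[G]-module homomorphism. Suppose that for every group homomorphism χ : G → {±1} with χ(h) = 1 for all h ∈ H, the induced map f_χ : M_χ → N_χ is an isomorphism. Then the induced map on H-coinvariants M_H → N_H is an isomorphism, where M_H := M/⟨h·m − m : h ∈ H, m ∈ M⟩ and likewise for N_H. -/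
/-!
Let `T` be a submodule containing the `H`-coinvariance relations and saturated for
multiplication by `2`, and suppose `z ∈ T + M^χ` for every character `χ` trivial on `H`. The
ideal `A = {r | r • z ∈ T}` of `ℤ[G]` contains `h - 1` for `h ∈ H`. If `A` met no power of `2`,
it would lie in a prime `p` with `2 ∉ p`; since `g² = 1`, every `g` maps to `±1` in the domain
`ℤ[G]/p`, which defines such a character `χ`. Every element of `M^χ` is killed by a product of
factors `g + χ(g)`, each mapping to `2χ(g) ≠ 0` in `ℤ[G]/p`, so `A ⊄ p`. Hence `2ⁿ • z ∈ T` for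
some `n`, and so `z ∈ T`. Injectivity is the case where `T` is the coinvariance relations of `M`,
surjectivity the case where `T` is those of `N` plus the image of `f`.
-/

section

variable (G : Type) [CommGroup G]

/-- `M^χ`: the `ℤ[G]`-submodule of `M` generated by `{g·m − χ(g)·m : g ∈ G, m ∈ M}`. -/
noncomputable def chSub (χ : G →* ℤˣ) (M : Type) [AddCommGroup M] [Module (MonoidAlgebra ℤ G) M] :
    Submodule (MonoidAlgebra ℤ G) M :=
  Submodule.span (MonoidAlgebra ℤ G)
    {x : M | ∃ (g : G) (m : M), x = (MonoidAlgebra.of ℤ G g) • m - ((χ g : ℤ)) • m}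

/-- The submodule of `M` generated by `{h·m − m : h ∈ H, m ∈ M}`; the quotient by it
is the module `M_H` of `H`-coinvariants. -/
noncomputable def coinvSub (H : Subgroup G) (M : Type) [AddCommGroup M] [Module (MonoidAlgebra ℤ G) M] :
    Submodule (MonoidAlgebra ℤ G) M :=
  Submodule.span (MonoidAlgebra ℤ G)
    {x : M | ∃ h ∈ H, ∃ m : M, x = (MonoidAlgebra.of ℤ G h) • m - m}

variable {G}
variable {M N : Type} [AddCommGroup M] [AddCommGroup N]
  [Module (MonoidAlgebra ℤ G) M] [Module (MonoidAlgebra ℤ G) N]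

lemma chSub_le (χ : G →* ℤˣ) (f : M →ₗ[MonoidAlgebra ℤ G] N) :
    chSub G χ M ≤ (chSub G χ N).comap f := by
  rw [chSub, Submodule.span_le]
  rintro x ⟨g, m, rfl⟩
  simp only [SetLike.mem_coe, Submodule.mem_comap, map_sub, map_zsmul, LinearMap.map_smul]
  exact Submodule.subset_span ⟨g, f m, rfl⟩

lemma coinvSub_le (H : Subgroup G) (f : M →ₗ[MonoidAlgebra ℤ G] N) :
    coinvSub G H M ≤ (coinvSub G H N).comap f := by
  rw [coinvSub, Submodule.span_le]
  rintro x ⟨h, hH, m, rfl⟩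
  simp only [SetLike.mem_coe, Submodule.mem_comap, map_sub, LinearMap.map_smul]
  exact Submodule.subset_span ⟨h, hH, f m, rfl⟩

end

lemma intCast_units_injective {S : Type*} [Ring S] (h2 : (2 : S) ≠ 0) :
    Function.Injective (fun u : ℤˣ => ((u : ℤ) : S)) := by
  have h1 : (1 : S) ≠ -1 := fun h => h2 <| by
    rw [← one_add_one_eq_two]; nth_rw 2 [h]; exact add_neg_cancel 1
  intro u w h
  rcases Int.units_eq_one_or u with rfl | rfl <;> rcases Int.units_eq_one_or w with rfl | rfl <;>
    simp_all [eq_comm]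

lemma exists_monoidHom_intUnits {G S : Type*} [Monoid G] [Ring S] [NoZeroDivisors S]
    (h2 : (2 : S) ≠ 0) (ψ : G →* S) (hψ : ∀ g, ψ g * ψ g = 1) :
    ∃ χ : G →* ℤˣ, ∀ g, ψ g = ((χ g : ℤ) : S) := by
  classical
  have hval : ∀ g, ψ g = (((if ψ g = 1 then 1 else -1 : ℤˣ) : ℤ) : S) := fun g => by
    split_ifs with h
    · simpa using h
    · simpa using (mul_self_eq_one_iff.mp (hψ g)).resolve_left h
  refine ⟨{ toFun := fun g => if ψ g = 1 then 1 else -1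
            map_one' := by simp
            map_mul' := fun a b => intCast_units_injective h2 ?_ }, hval⟩
  simp only [Units.val_mul, Int.cast_mul]
  rw [← hval, ← hval, ← hval, map_mul]

section

variable {G : Type} [CommGroup G] {M N : Type} [AddCommGroup M] [AddCommGroup N]
  [Module (MonoidAlgebra ℤ G) M] [Module (MonoidAlgebra ℤ G) N]

lemma exists_smul_eq_zero_of_mem_chSub (hG : ∀ g : G, g ^ 2 = 1) {S : Type*} [Ring S]
    [IsDomain S] (h2 : (2 : S) ≠ 0) (φ : MonoidAlgebra ℤ G →+* S) {χ : G →* ℤˣ}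
    (hχ : ∀ g, φ (MonoidAlgebra.of ℤ G g) = ((χ g : ℤ) : S)) {x : M} (hx : x ∈ chSub G χ M) :
    ∃ v, φ v ≠ 0 ∧ v • x = 0 := by
  induction hx using Submodule.span_induction with
  | mem x hx =>
    obtain ⟨g, m, rfl⟩ := hx
    refine ⟨MonoidAlgebra.of ℤ G g + ((χ g : ℤ) : MonoidAlgebra ℤ G), ?_, ?_⟩
    · rw [map_add, hχ, map_intCast, ← two_mul]
      exact mul_ne_zero h2 (by rcases Int.units_eq_one_or (χ g) with h | h <;> simp [h])
    · have hsq : (MonoidAlgebra.of ℤ G g + ((χ g : ℤ) : MonoidAlgebra ℤ G)) *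
          (MonoidAlgebra.of ℤ G g - ((χ g : ℤ) : MonoidAlgebra ℤ G)) = 0 := by
        rw [← sq_sub_sq, ← map_pow, hG, map_one, ← Int.cast_pow, ← Units.val_pow_eq_pow_val,
          Int.units_sq, Units.val_one, Int.cast_one, sub_self]
      rw [← Int.cast_smul_eq_zsmul (MonoidAlgebra ℤ G), ← sub_smul, smul_smul, hsq, zero_smul]
  | zero => exact ⟨1, by simp, smul_zero 1⟩
  | add x y _ _ hx hy =>
    obtain ⟨v, hv, hvx⟩ := hx
    obtain ⟨w, hw, hwy⟩ := hy
    refine ⟨v * w, by simpa using mul_ne_zero hv hw, ?_⟩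
    rw [smul_add, mul_comm, mul_smul, hvx, smul_zero, zero_add, mul_comm, mul_smul, hwy, smul_zero]
  | smul r x _ hx =>
    obtain ⟨v, hv, hvx⟩ := hx
    exact ⟨v, hv, by rw [smul_comm, hvx, smul_zero]⟩

lemma coinvSub_le_chSub (H : Subgroup G) {χ : G →* ℤˣ} (hχ : ∀ h ∈ H, χ h = 1) :
    coinvSub G H M ≤ chSub G χ M := by
  rw [coinvSub, Submodule.span_le]
  rintro x ⟨h, hh, m, rfl⟩
  exact Submodule.subset_span ⟨h, m, by rw [hχ h hh, Units.val_one, one_smul]⟩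

lemma mem_of_two_pow_smul_mem {T : Submodule (MonoidAlgebra ℤ G) M}
    (hT : ∀ y, (2 : ℤ) • y ∈ T → y ∈ T) (n : ℕ) {y : M}
    (hy : (2 : MonoidAlgebra ℤ G) ^ n • y ∈ T) : y ∈ T := by
  induction n generalizing y with
  | zero => simpa using hy
  | succ n ih =>
    rw [pow_succ, mul_smul, two_smul, ← two_smul ℤ] at hy
    exact hT y (ih hy)

lemma mem_of_two_zsmul_mem {T : Submodule (MonoidAlgebra ℤ G) M}
    (h2 : Function.Injective (fun m : M => (2 : ℤ) • m))
    (hT : T ≤ T.map ((2 : ℤ) • LinearMap.id)) {y : M} (hy : (2 : ℤ) • y ∈ T) : y ∈ T := by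
  obtain ⟨t, ht, hty⟩ := hT hy
  exact (h2 hty : t = y) ▸ ht

lemma coinvSub_le_map_two_zsmul (H : Subgroup G)
    (h2 : Function.Surjective (fun m : M => (2 : ℤ) • m)) :
    coinvSub G H M ≤ (coinvSub G H M).map ((2 : ℤ) • LinearMap.id) := by
  refine Submodule.span_le.mpr ?_
  rintro _ ⟨h, hh, m, rfl⟩
  obtain ⟨m, rfl⟩ := h2 m
  exact ⟨_, Submodule.subset_span ⟨h, hh, m, rfl⟩, by
    simp only [LinearMap.smul_apply, LinearMap.id_apply]
    rw [smul_sub, smul_comm (2 : ℤ)]⟩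

lemma range_le_map_two_zsmul (f : M →ₗ[MonoidAlgebra ℤ G] N)
    (h2 : Function.Surjective (fun m : M => (2 : ℤ) • m)) :
    LinearMap.range f ≤ (LinearMap.range f).map ((2 : ℤ) • LinearMap.id) := by
  rintro _ ⟨m, rfl⟩
  obtain ⟨m, rfl⟩ := h2 m
  exact ⟨f m, ⟨m, rfl⟩, (map_zsmul f 2 m).symm⟩

lemma mem_of_forall_mem_sup_chSub (hG : ∀ g : G, g ^ 2 = 1) (H : Subgroup G)
    {T : Submodule (MonoidAlgebra ℤ G) N} (hHT : coinvSub G H N ≤ T)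
    (hT : ∀ y, (2 : ℤ) • y ∈ T → y ∈ T) {z : N}
    (hz : ∀ χ : G →* ℤˣ, (∀ h ∈ H, χ h = 1) → z ∈ T ⊔ chSub G χ N) : z ∈ T := by
  set A : Ideal (MonoidAlgebra ℤ G) := T.comap (LinearMap.toSpanSingleton _ N z)
  have hA : ∀ r, r ∈ A ↔ r • z ∈ T := fun r => Iff.rfl
  by_contra hzT
  have hdisj :
      Disjoint (A : Set (MonoidAlgebra ℤ G)) (Submonoid.powers (2 : MonoidAlgebra ℤ G)) := by
    rw [Set.disjoint_left]
    rintro _ hn ⟨n, rfl⟩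
    exact hzT (mem_of_two_pow_smul_mem hT n ((hA _).mp hn))
  obtain ⟨p, hp, hAp, hp2⟩ := Ideal.exists_le_prime_disjoint A _ hdisj
  set π := Ideal.Quotient.mk p
  have h2 : (2 : MonoidAlgebra ℤ G ⧸ p) ≠ 0 := fun h => Set.disjoint_left.mp hp2
    (Ideal.Quotient.eq_zero_iff_mem.mp (by rwa [map_ofNat])) ⟨1, pow_one 2⟩
  obtain ⟨χ, hχ⟩ := exists_monoidHom_intUnits h2 (π.toMonoidHom.comp (MonoidAlgebra.of ℤ G))
    fun g => by rw [← map_mul, ← sq, hG, map_one]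
  have hχH : ∀ h ∈ H, χ h = 1 := by
    intro h hh
    have hhA : MonoidAlgebra.of ℤ G h - 1 ∈ A := by
      rw [hA, sub_smul, one_smul]
      exact hHT (Submodule.subset_span ⟨h, hh, z, rfl⟩)
    apply intCast_units_injective h2
    simpa [← hχ, sub_eq_zero] using Ideal.Quotient.eq_zero_iff_mem.mpr (hAp hhA)
  obtain ⟨t, ht, c, hc, rfl⟩ := Submodule.mem_sup.mp (hz χ hχH)
  obtain ⟨v, hv, hvc⟩ := exists_smul_eq_zero_of_mem_chSub hG h2 π hχ hc
  refine hv (Ideal.Quotient.eq_zero_iff_mem.mpr (hAp ((hA v).mpr ?_)))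
  rw [smul_add, hvc, add_zero]
  exact T.smul_mem v ht

lemma mapQ_coinvSub_injective (hG : ∀ g : G, g ^ 2 = 1) (H : Subgroup G)
    (h2M : Function.Bijective (fun m : M => (2 : ℤ) • m)) (f : M →ₗ[MonoidAlgebra ℤ G] N)
    (hχ : ∀ χ : G →* ℤˣ, (∀ h ∈ H, χ h = 1) →
      Function.Injective (Submodule.mapQ (chSub G χ M) (chSub G χ N) f (chSub_le χ f))) :
    Function.Injective
      (Submodule.mapQ (coinvSub G H M) (coinvSub G H N) f (coinvSub_le H f)) := by
  refine (injective_iff_map_eq_zero _).mpr fun x hx => ?_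
  obtain ⟨m, rfl⟩ := Submodule.Quotient.mk_surjective _ x
  rw [Submodule.mapQ_apply] at hx
  rw [Submodule.Quotient.mk_eq_zero] at hx ⊢
  refine mem_of_forall_mem_sup_chSub hG H le_rfl
    (fun _ => mem_of_two_zsmul_mem h2M.1 (coinvSub_le_map_two_zsmul H h2M.2)) fun χ hχH => ?_
  refine Submodule.mem_sup_right ((Submodule.Quotient.mk_eq_zero _).mp ((hχ χ hχH) ?_))
  rw [Submodule.mapQ_apply, map_zero, Submodule.Quotient.mk_eq_zero]
  exact coinvSub_le_chSub H hχH hx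

lemma mapQ_coinvSub_surjective (hG : ∀ g : G, g ^ 2 = 1) (H : Subgroup G)
    (h2M : Function.Surjective (fun m : M => (2 : ℤ) • m))
    (h2N : Function.Bijective (fun n : N => (2 : ℤ) • n)) (f : M →ₗ[MonoidAlgebra ℤ G] N)
    (hχ : ∀ χ : G →* ℤˣ, (∀ h ∈ H, χ h = 1) →
      Function.Surjective (Submodule.mapQ (chSub G χ M) (chSub G χ N) f (chSub_le χ f))) :
    Function.Surjective
      (Submodule.mapQ (coinvSub G H M) (coinvSub G H N) f (coinvSub_le H f)) := by
  intro y
  obtain ⟨z, rfl⟩ := Submodule.Quotient.mk_surjective _ y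
  have hT : coinvSub G H N ⊔ LinearMap.range f ≤
      (coinvSub G H N ⊔ LinearMap.range f).map ((2 : ℤ) • LinearMap.id) := by
    rw [Submodule.map_sup]
    exact sup_le_sup (coinvSub_le_map_two_zsmul H h2N.2) (range_le_map_two_zsmul f h2M)
  have hz : z ∈ coinvSub G H N ⊔ LinearMap.range f := by
    refine mem_of_forall_mem_sup_chSub hG H le_sup_left
      (fun _ => mem_of_two_zsmul_mem h2N.1 hT) fun χ hχH => ?_
    obtain ⟨x, hx⟩ := hχ χ hχH (Submodule.Quotient.mk z)
    obtain ⟨m, rfl⟩ := Submodule.Quotient.mk_surjective _ x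
    rw [Submodule.mapQ_apply, Submodule.Quotient.eq] at hx
    rw [← sub_sub_cancel (f m) z]
    exact Submodule.sub_mem _ (Submodule.mem_sup_left (Submodule.mem_sup_right ⟨m, rfl⟩))
      (Submodule.mem_sup_right hx)
  obtain ⟨a, ha, _, ⟨m, rfl⟩, rfl⟩ := Submodule.mem_sup.mp hz
  refine ⟨Submodule.Quotient.mk m, ?_⟩
  rw [Submodule.mapQ_apply, Submodule.Quotient.eq, sub_add_cancel_right]
  exact Submodule.neg_mem _ ha

end

/-- character-theoretic local-global principle.  If `G` is an abelian group
of exponent `2`, `H ≤ G`, and `f : M → N` is a map of `ℤ[G]`-modules on which `2` acts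
bijectively such that `f_χ : M_χ → N_χ` is an isomorphism for every character
`χ : G → {±1}` trivial on `H`, then the induced map `M_H → N_H` on `H`-coinvariants is
an isomorphism. -/
theorem stmt15 (G : Type) [CommGroup G] (hG : ∀ g : G, g ^ 2 = 1) (H : Subgroup G)
    (M N : Type) [AddCommGroup M] [AddCommGroup N]
    [Module (MonoidAlgebra ℤ G) M] [Module (MonoidAlgebra ℤ G) N]
    (h2M : Function.Bijective (fun m : M => (2 : ℤ) • m))
    (h2N : Function.Bijective (fun n : N => (2 : ℤ) • n))
    (f : M →ₗ[MonoidAlgebra ℤ G] N)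
    (hχ : ∀ χ : G →* ℤˣ, (∀ h ∈ H, χ h = 1) →
      Function.Bijective (Submodule.mapQ (chSub G χ M) (chSub G χ N) f (chSub_le χ f))) :
    Function.Bijective
      (Submodule.mapQ (coinvSub G H M) (coinvSub G H N) f (coinvSub_le H f)) :=
  ⟨mapQ_coinvSub_injective hG H h2M f fun χ hχH => (hχ χ hχH).1,
    mapQ_coinvSub_surjective hG H h2M.2 h2N f fun χ hχH => (hχ χ hχH).2⟩
end
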